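/- Let K ≥ 1, let n ≥ 1, and let X be a (2n+1)-periodic configuration with density ρ = m(X,1,2n+1)/(2n+1). Then for every integer t ≥ 2n+1: if ρ ≤ K/2 then T^t X is free, and if ρ ≥ K/2 then the dual configuration (T^t X)* is free (equivalently, (T^t X)(x)+(T^t X)(x+1) ≥ K for all x ∈ ℤ). -/

import Mathlib

/-- A configuration on the `K`-lane road: at most `K` particles per site. -/
def IsConf (K : ℤ) (X : ℤ → ℤ) : Prop := ∀ x, 0 ≤ X x ∧ X x ≤ K

/-- The traffic map `T`. -/
def Tmap (K : ℤ) (X : ℤ → ℤ) : ℤ → ℤ := fun x =>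
  X x + min (X (x - 1)) (K - X x) - min (X x) (K - X (x + 1))

/-- A configuration is free if `X(x) + X(x+1) ≤ K` for all `x`. -/
def IsFree (K : ℤ) (X : ℤ → ℤ) : Prop := ∀ x, X x + X (x + 1) ≤ K

/-- The dual configuration `X*(x) = K - X(x)`, describing empty places. -/
def dualConf (K : ℤ) (X : ℤ → ℤ) : ℤ → ℤ := fun x => K - X x

/-- A configuration is `n`-periodic if `X(x+n) = X(x)` for all `x`. -/
def IsPeriodic (n : ℤ) (X : ℤ → ℤ) : Prop := ∀ x, X (x + n) = X x

/-- The number of particles `m(X,a,b) = Σ_{x=a}^{b} X(x)`. -/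
noncomputable def msum (X : ℤ → ℤ) (a b : ℤ) : ℤ := ∑ x ∈ Finset.Icc a b, X x


/-!
Let `ψ(y) = K y - 2 F(y)` with `F` a discrete primitive of `X`, so that
`2 X(x) = K + ψ(x-1) - ψ(x)`. One step of `T` acts on this potential as the min-plus step
`μ ↦ (x ↦ min (μ (x-1)) (μ (x+1)))`, hence `2 (T^t X)(x) = K + μ_t(x-1) - μ_t(x)` where `μ_t(x)`
is the minimum of `ψ` over `x - t, x - t + 2, …, x + t`, and `T^t X` is free at `x` iff
`μ_t(x-1) ≤ μ_t(x+1)`. If `X` is `N`-periodic, `ψ(y + N) = ψ(y) + N (K - 2ρ)`, so at density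
`ρ ≤ K/2` the potential does not decrease along `N`. The window of `x+1` is that of `x-1` shifted
by `2`; its only new point `x+1+t` is then dominated by `x+1+t-2N`, which lies in the window of
`x-1` once `N ≤ t+1`. The case `ρ ≥ K/2` is the mirror image under `y ↦ -y`.
-/

section Msum

variable (X : ℤ → ℤ) {a b : ℤ}

lemma msum_eq_zero_of_lt (h : b < a) : msum X a b = 0 := by
  simp [msum, Finset.Icc_eq_empty_of_lt h]

lemma msum_add_one_right (h : a ≤ b + 1) : msum X a (b + 1) = msum X a b + X (b + 1) := by
  rw [msum, ← Order.succ_eq_add_one, ← Finset.insert_Icc_right_eq_Icc_succ h,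
    Finset.sum_insert (by simp), msum, add_comm]

lemma msum_eq_add_msum_add_one (h : a ≤ b) : msum X a b = X a + msum X (a + 1) b := by
  rw [msum, ← Finset.insert_Icc_succ_left_eq_Icc h, Finset.sum_insert (by simp),
    Order.succ_eq_add_one, msum]

end Msum

-- `msum X 1 y - msum X (y + 1) 0` is the primitive of `X` vanishing at `0`; at most one of the
-- two sums is nonempty.
noncomputable def potential (K : ℤ) (X : ℤ → ℤ) (y : ℤ) : ℤ :=
  K * y - 2 * (msum X 1 y - msum X (y + 1) 0)

lemma two_mul_eq_potential_sub (K : ℤ) (X : ℤ → ℤ) (x : ℤ) :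
    2 * X x = K + potential K X (x - 1) - potential K X x := by
  have hprim : msum X 1 x - msum X (x + 1) 0 = msum X 1 (x - 1) - msum X x 0 + X x := by
    rcases le_or_gt 1 x with hx | hx
    · have := msum_add_one_right X (a := 1) (b := x - 1) (by omega)
      rw [sub_add_cancel] at this
      rw [this, msum_eq_zero_of_lt X (by omega : 0 < x + 1),
        msum_eq_zero_of_lt X (by omega : 0 < x)]
      ring
    · rw [msum_eq_zero_of_lt X (by omega : x < 1), msum_eq_zero_of_lt X (by omega : x - 1 < 1),
        msum_eq_add_msum_add_one X (by omega : x ≤ 0)]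
      ring
  simp only [potential, sub_add_cancel]
  linear_combination (-2) * hprim

lemma potential_of_nonneg (K : ℤ) (X : ℤ → ℤ) {N : ℤ} (hN : 0 ≤ N) :
    potential K X N = K * N - 2 * msum X 1 N := by
  simp [potential, msum_eq_zero_of_lt X (by omega : 0 < N + 1)]

lemma sub_add_period_eq_of_periodic_sub {f ψ : ℤ → ℤ} {N : ℤ} (hψ : ∀ x, ψ x - ψ (x - 1) = f x)
    (hf : Function.Periodic f N) (y : ℤ) : ψ (y + N) - ψ y = ψ N - ψ 0 := by
  have hg : Function.Periodic (fun y => ψ (y + N) - ψ y) 1 := fun y => by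
    have h1 := hψ (y + 1 + N)
    have h2 := hψ (y + 1)
    rw [show y + 1 + N - 1 = y + N by ring, hf (y + 1)] at h1
    rw [add_sub_cancel_right] at h2
    show ψ (y + 1 + N) - ψ (y + 1) = ψ (y + N) - ψ y
    linarith
  simpa using hg.int_mul_eq y

lemma potential_add_period (K : ℤ) {X : ℤ → ℤ} {N : ℤ} (hN : 0 ≤ N) (hper : IsPeriodic N X)
    (y : ℤ) : potential K X (y + N) = potential K X y + (K * N - 2 * msum X 1 N) := by
  have key := sub_add_period_eq_of_periodic_sub (f := fun x => K - 2 * X x)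
    (ψ := potential K X) (N := N)
    (fun x => by linarith [two_mul_eq_potential_sub K X x]) (fun x => by simp only [hper x]) y
  rw [potential_of_nonneg K X hN, potential_of_nonneg K X le_rfl] at key
  simp only [msum_eq_zero_of_lt X zero_lt_one] at key
  linarith

section WindowMin

variable (ψ : ℤ → ℤ)

noncomputable def windowMin (t : ℕ) (x : ℤ) : ℤ :=
  (Finset.range (t + 1)).inf' Finset.nonempty_range_add_one fun j => ψ (x - t + 2 * j)

variable {ψ}

lemma windowMin_le {t : ℕ} {x y : ℤ} (j : ℕ) (hj : j ≤ t) (hy : x - t + 2 * j = y) :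
    windowMin ψ t x ≤ ψ y :=
  hy ▸ Finset.inf'_le _ (Finset.mem_range.mpr (by omega))

lemma le_windowMin {t : ℕ} {x c : ℤ} (hc : ∀ j ≤ t, c ≤ ψ (x - t + 2 * j)) :
    c ≤ windowMin ψ t x :=
  Finset.le_inf' _ _ fun j hj => hc j (by simpa [Nat.lt_succ_iff] using hj)

variable (ψ)

lemma windowMin_zero (x : ℤ) : windowMin ψ 0 x = ψ x := by
  simp [windowMin]

lemma windowMin_succ (t : ℕ) (x : ℤ) :
    windowMin ψ (t + 1) x = min (windowMin ψ t (x - 1)) (windowMin ψ t (x + 1)) := by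
  refine le_antisymm (le_min (le_windowMin fun j hj => ?_) (le_windowMin fun j hj => ?_))
    (le_windowMin fun j hj => ?_)
  · exact windowMin_le j (by omega) (by push_cast; ring)
  · exact windowMin_le (j + 1) (by omega) (by push_cast; ring)
  · rcases j with _ | j
    · exact (min_le_left _ _).trans (windowMin_le 0 (by omega) (by push_cast; ring))
    · exact (min_le_right _ _).trans (windowMin_le j (by omega) (by push_cast; ring))

lemma windowMin_comp_neg (t : ℕ) (x : ℤ) :
    windowMin (fun y => ψ (-y)) t x = windowMin ψ t (-x) := by
  refine le_antisymm (le_windowMin fun j hj => ?_) (le_windowMin fun j hj => ?_)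
  · exact (windowMin_le (ψ := fun y => ψ (-y)) (t - j) (by omega) rfl).trans_eq
      (congrArg ψ (by push_cast [hj]; ring))
  · exact windowMin_le (y := -(x - t + 2 * j)) (t - j) (by omega) (by push_cast [hj]; ring)

lemma windowMin_sub_one_le_add_one {N t : ℕ} (hN : 1 ≤ N) (hNt : N ≤ t + 1)
    (hψ : ∀ y, ψ (y - 2 * N) ≤ ψ y) (x : ℤ) :
    windowMin ψ t (x - 1) ≤ windowMin ψ t (x + 1) := by
  refine le_windowMin fun j hj => ?_
  rcases hj.lt_or_eq with hj | rfl
  · exact windowMin_le (j + 1) (by omega) (by push_cast; ring)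
  · have hjN : N ≤ j + 1 := by omega
    exact (windowMin_le (j + 1 - N) (by omega) (by push_cast [hjN]; ring)).trans (hψ _)

lemma windowMin_add_one_le_sub_one {N t : ℕ} (hN : 1 ≤ N) (hNt : N ≤ t + 1)
    (hψ : ∀ y, ψ (y + 2 * N) ≤ ψ y) (x : ℤ) :
    windowMin ψ t (x + 1) ≤ windowMin ψ t (x - 1) := by
  have := windowMin_sub_one_le_add_one (fun y => ψ (-y)) hN hNt
    (fun y => by simpa [neg_sub, sub_eq_neg_add] using hψ (-y)) (-x)
  rwa [windowMin_comp_neg, windowMin_comp_neg, neg_sub', neg_neg, neg_add', neg_neg,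
    sub_neg_eq_add] at this

end WindowMin

section Dynamics

variable {K : ℤ} {X ψ : ℤ → ℤ}

theorem two_mul_iterate_Tmap (hψ : ∀ x, 2 * X x = K + ψ (x - 1) - ψ x) (t : ℕ) (x : ℤ) :
    2 * (Tmap K)^[t] X x = K + windowMin ψ t (x - 1) - windowMin ψ t x := by
  induction t generalizing x with
  | zero => simpa [windowMin_zero] using hψ x
  | succ t ih =>
    have hl := ih (x - 1)
    have hr := ih (x + 1)
    have hs := windowMin_succ ψ t (x - 1)
    rw [add_sub_cancel_right] at hr
    rw [sub_add_cancel] at hs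
    rw [Function.iterate_succ_apply', Tmap, hs, windowMin_succ ψ t x]
    have hm := ih x
    omega

lemma two_mul_iterate_add_iterate_succ (hψ : ∀ x, 2 * X x = K + ψ (x - 1) - ψ x) (t : ℕ)
    (x : ℤ) : 2 * ((Tmap K)^[t] X x + (Tmap K)^[t] X (x + 1))
      = 2 * K + windowMin ψ t (x - 1) - windowMin ψ t (x + 1) := by
  have := two_mul_iterate_Tmap hψ t (x + 1)
  rw [add_sub_cancel_right] at this
  linarith [two_mul_iterate_Tmap hψ t x]

lemma isFree_iterate_Tmap {N t : ℕ} (hN : 1 ≤ N) (hNt : N ≤ t + 1)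
    (hψ : ∀ x, 2 * X x = K + ψ (x - 1) - ψ x) (hmono : ∀ y, ψ y ≤ ψ (y + N)) :
    IsFree K ((Tmap K)^[t] X) := fun x => by
  have := windowMin_sub_one_le_add_one ψ hN hNt
    (fun y => (hmono _).trans ((hmono _).trans_eq (congrArg ψ (by ring)))) x
  linarith [two_mul_iterate_add_iterate_succ hψ t x]

lemma le_iterate_add_iterate_succ {N t : ℕ} (hN : 1 ≤ N) (hNt : N ≤ t + 1)
    (hψ : ∀ x, 2 * X x = K + ψ (x - 1) - ψ x) (hanti : ∀ y, ψ (y + N) ≤ ψ y) (x : ℤ) :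
    K ≤ (Tmap K)^[t] X x + (Tmap K)^[t] X (x + 1) := by
  have := windowMin_add_one_le_sub_one ψ hN hNt
    (fun y => (congrArg ψ (by ring)).trans_le ((hanti (y + N)).trans (hanti y))) x
  linarith [two_mul_iterate_add_iterate_succ hψ t x]

end Dynamics

lemma isFree_dualConf_iff {K : ℤ} {Y : ℤ → ℤ} :
    IsFree K (dualConf K Y) ↔ ∀ x, K ≤ Y x + Y (x + 1) :=
  forall_congr' fun x => by simp only [dualConf]; omega

theorem stmt_13_general (K : ℤ) (n : ℕ) (X : ℤ → ℤ)
    (hper : IsPeriodic (2 * n + 1) X) (ρ : ℝ)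
    (hρ : ρ = (msum X 1 (2 * n + 1) : ℝ) / (2 * n + 1)) :
    ∀ t : ℕ, 2 * n + 1 ≤ t →
      (ρ ≤ (K : ℝ) / 2 → IsFree K ((Tmap K)^[t] X)) ∧
      ((K : ℝ) / 2 ≤ ρ →
        IsFree K (dualConf K ((Tmap K)^[t] X)) ∧
        ∀ x : ℤ, K ≤ (Tmap K)^[t] X x + (Tmap K)^[t] X (x + 1)) := by
  intro t ht
  have hψ := two_mul_eq_potential_sub K X
  have hshift := potential_add_period K (by positivity) hper
  have hN : (0 : ℝ) < 2 * n + 1 := by positivity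
  refine ⟨fun hlow => ?_, fun hhigh => ?_⟩
  · have hD : 2 * msum X 1 (2 * n + 1) ≤ K * (2 * n + 1) := by
      rw [hρ, div_le_div_iff₀ hN two_pos] at hlow
      exact_mod_cast (by linarith : (2 * msum X 1 (2 * n + 1) : ℝ) ≤ K * (2 * n + 1))
    exact isFree_iterate_Tmap (N := 2 * n + 1) (by omega) (by omega) hψ
      fun y => by push_cast; linarith [hshift y]
  · have hD : K * (2 * n + 1) ≤ 2 * msum X 1 (2 * n + 1) := by
      rw [hρ, div_le_div_iff₀ two_pos hN] at hhigh
      exact_mod_cast (by linarith : (K * (2 * n + 1) : ℝ) ≤ 2 * msum X 1 (2 * n + 1))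
    have hsum := le_iterate_add_iterate_succ (N := 2 * n + 1) (t := t) (by omega) (by omega)
      hψ fun y => by push_cast; linarith [hshift y]
    exact ⟨isFree_dualConf_iff.2 hsum, hsum⟩

/-- A `(2n+1)`-periodic configuration reaches its steady state after at most
`2n+1` iterations. -/
theorem stmt_13 (K : ℤ) (hK : 1 ≤ K) (n : ℕ) (hn : 1 ≤ n) (X : ℤ → ℤ)
    (hX : IsConf K X) (hper : IsPeriodic (2 * n + 1) X) (ρ : ℝ)
    (hρ : ρ = (msum X 1 (2 * n + 1) : ℝ) / (2 * n + 1)) :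
    ∀ t : ℕ, 2 * n + 1 ≤ t →
      (ρ ≤ (K : ℝ) / 2 → IsFree K ((Tmap K)^[t] X)) ∧
      ((K : ℝ) / 2 ≤ ρ →
        IsFree K (dualConf K ((Tmap K)^[t] X)) ∧
        ∀ x : ℤ, K ≤ (Tmap K)^[t] X x + (Tmap K)^[t] X (x + 1)) :=
  stmt_13_general K n X hper ρ hρ
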